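/- Let (F,σ) be a constant-stable difference field of characteristic 0, let e ≥ 1, let λ_1,…,λ_e be integers > 1, and let α_1,…,α_e ∈ const(F,σ) with α_i^{λ_i} = 1 for each i. Let E := F[z_1,…,z_e]/⟨z_1^{λ_1}−1,…,z_e^{λ_e}−1⟩ with t_i the image of z_i, equipped with the unique ring automorphism extending σ with σ(t_i) = α_i·t_i. Then const(E,σ) = const(F,σ) if and only if each α_i is a primitive λ_i-th root of unity in F and gcd(λ_i,λ_j) = 1 for all i ≠ j. -/

import Mathlib

/-!
The quotient `F[z]/⟨z_i^{λ_i} - 1⟩` is the group algebra `F[G]` of `G = ∏ ℤ/λ_i`, and `σ` acts on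
it by `c t^g ↦ σ(c) χ(g) t^g`, where `χ(g) = ∏ α_i^{g_i}` is a character of `G`. If `χ(g) = 1` for
some `g ≠ 0`, then `t^g` is a constant outside `F`. Conversely, if `χ` is injective and
`Σ c_g t^g` is constant, then `σ(c_g) χ(g) = c_g`; iterating `k` times, with `k` the order of the
root of unity `χ(g)`, gives `σ^k(c_g) = c_g`, so `c_g` is a constant by constant stability and
`c_g = 0` for `g ≠ 0`.

A character of `∏ ℤ/λ_i` into a field is injective iff every factor embeds, i.e. every `α_i` is a
primitive `λ_i`-th root of unity, and the `λ_i` are pairwise coprime: finite subgroups of `F^×`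
are cyclic, and `ℤ/a × ℤ/b` is cyclic only if `gcd(a, b) = 1`.
-/

open Function

lemma AddMonoidHom.injective_coprod_single {ι : Type*} [DecidableEq ι] {A : ι → Type*}
    [∀ i, AddCommGroup (A i)] {i j : ι} (hij : i ≠ j) :
    Injective ((AddMonoidHom.single A i).coprod (AddMonoidHom.single A j)) := by
  refine (injective_iff_map_eq_zero _).mpr fun ⟨a, b⟩ h => ?_
  have hi := congr_fun h i
  have hj := congr_fun h j
  simp [Pi.single_eq_of_ne hij, Pi.single_eq_of_ne hij.symm] at hi hj
  simp [hi, hj]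

namespace AddChar

section Pi

variable {ι M : Type*} [Fintype ι] [CommMonoid M] {A : ι → Type*} [∀ i, AddMonoid (A i)]

def pi (ψ : ∀ i, AddChar (A i) M) : AddChar (∀ i, A i) M :=
  ∏ i, (ψ i).compAddMonoidHom (Pi.evalAddMonoidHom A i)

lemma pi_apply (ψ : ∀ i, AddChar (A i) M) (a : ∀ i, A i) : pi ψ a = ∏ i, ψ i (a i) := by
  simp [pi, prod_apply]

lemma pi_apply_single [DecidableEq ι] (ψ : ∀ i, AddChar (A i) M) (i : ι) (a : A i) :
    pi ψ (Pi.single i a) = ψ i a := by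
  rw [pi_apply, Fintype.prod_eq_single i fun j hj => by simp [Pi.single_eq_of_ne hj]]
  simp

end Pi

section PiZMod

variable {ι M : Type*} [Fintype ι] [CommMonoid M] {n : ι → ℕ} [∀ i, NeZero (n i)]

def piZMod {ζ : ι → M} (hζ : ∀ i, ζ i ^ n i = 1) : AddChar (∀ i, ZMod (n i)) M :=
  pi fun i => zmodChar (n i) (hζ i)

lemma piZMod_apply {ζ : ι → M} (hζ : ∀ i, ζ i ^ n i = 1) (g : ∀ i, ZMod (n i)) :
    piZMod hζ g = ∏ i, ζ i ^ (g i).val :=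
  pi_apply _ g

variable [DecidableEq ι]

lemma piZMod_single_one {ζ : ι → M} (hζ : ∀ i, ζ i ^ n i = 1) (i : ι) :
    piZMod hζ (Pi.single i 1) = ζ i := by
  rw [piZMod, pi_apply_single, ← Nat.cast_one, zmodChar_apply', pow_one]

lemma apply_eq_prod_pow_val (ψ : AddChar (∀ i, ZMod (n i)) M) (g : ∀ i, ZMod (n i)) :
    ψ g = ∏ i, ψ (Pi.single i 1) ^ (g i).val := by
  conv_lhs => rw [← Finset.univ_sum_single g]
  rw [show ψ (∑ i, Pi.single i (g i)) = ψ.toMonoidHom (∏ i, .ofAdd (Pi.single i (g i)))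
    from rfl, map_prod]
  refine Finset.prod_congr rfl fun i _ => ?_
  change ψ (Pi.single i (g i)) = _
  rw [← map_nsmul_eq_pow, ← Pi.single_smul, nsmul_eq_mul, mul_one, ZMod.natCast_zmod_val]

lemma ext_pi_zmod {ψ φ : AddChar (∀ i, ZMod (n i)) M}
    (h : ∀ i, ψ (Pi.single i 1) = φ (Pi.single i 1)) : ψ = φ := by
  ext g
  simp only [apply_eq_prod_pow_val _ g, h]

end PiZMod

section Injective

variable {F : Type*} [Field F]

lemma zmodChar_injective_iff {n : ℕ} [NeZero n] {ζ : F} (hζ : ζ ^ n = 1) :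
    Injective (zmodChar n hζ) ↔ IsPrimitiveRoot ζ n := by
  rw [injective_iff, IsPrimitiveRoot.iff_def]
  refine ⟨fun h => ⟨hζ, fun l hl => ?_⟩, fun h a ha => ?_⟩
  · rw [← ZMod.natCast_eq_zero_iff]
    exact h (by rwa [zmodChar_apply'])
  · rw [← ZMod.natCast_zmod_val a, ZMod.natCast_eq_zero_iff]
    exact h.2 _ ha

lemma coprime_natCard_of_injective_prod {B C : Type*} [AddCommGroup B] [AddCommGroup C]
    [Finite B] [Finite C] (ψ : AddChar (B × C) F) (hψ : Injective ψ) :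
    (Nat.card B).Coprime (Nat.card C) :=
  have : IsCyclic (Multiplicative (B × C)) := isCyclic_of_injective_ringHom ψ.toMonoidHom hψ
  have : IsAddCyclic (B × C) := isCyclic_multiplicative_iff.mp this
  coprime_card_of_isAddCyclic_prod B C

variable {ι : Type*} [Fintype ι] [DecidableEq ι] {A : ι → Type*} [∀ i, AddCommGroup (A i)]

lemma eq_zero_of_pi_apply_eq_one {ψ : ∀ i, AddChar (A i) F} (hψ : ∀ i, Injective (ψ i))
    (hcop : Pairwise fun i j => (Nat.card (A i)).Coprime (Nat.card (A j))) {g : ∀ i, A i}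
    (hg : pi ψ g = 1) : g = 0 := by
  funext i
  set N := ∏ j ∈ Finset.univ.erase i, Nat.card (A j)
  have hNg : N • g = Pi.single i (N • g i) := by
    ext j
    rcases eq_or_ne j i with rfl | hji
    · simp
    · rw [Pi.single_eq_of_ne hji, Pi.smul_apply]
      obtain ⟨k, hk⟩ : Nat.card (A j) ∣ N :=
        Finset.dvd_prod_of_mem _ (Finset.mem_erase.mpr ⟨hji, Finset.mem_univ j⟩)
      rw [hk, mul_nsmul', card_nsmul_eq_zero']
  have hNgi : N • g i = 0 := injective_iff.mp (hψ i) <| by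
    rw [← pi_apply_single, ← hNg, map_nsmul_eq_pow, hg, one_pow]
  have hcopN : (Nat.card (A i)).Coprime N :=
    Nat.Coprime.prod_right fun j hj => hcop (Finset.ne_of_mem_erase hj).symm
  rw [Pi.zero_apply, ← AddMonoid.addOrderOf_eq_one_iff, ← Nat.dvd_one, ← hcopN.gcd_eq_one]
  exact Nat.dvd_gcd (addOrderOf_dvd_natCard _) (addOrderOf_dvd_of_nsmul_eq_zero hNgi)

theorem injective_pi_iff [∀ i, Finite (A i)] (ψ : ∀ i, AddChar (A i) F) :
    Injective (pi ψ) ↔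
      (∀ i, Injective (ψ i)) ∧
        Pairwise fun i j => (Nat.card (A i)).Coprime (Nat.card (A j)) := by
  refine ⟨fun h => ⟨fun i => ?_, fun i j hij => ?_⟩, fun ⟨hψ, hcop⟩ => ?_⟩
  · simpa [comp_def, pi_apply_single] using h.comp (Pi.single_injective (M := A) i)
  · exact coprime_natCard_of_injective_prod ((pi ψ).compAddMonoidHom _)
      (h.comp (AddMonoidHom.injective_coprod_single hij))
  · exact injective_iff.mpr fun g hg => eq_zero_of_pi_apply_eq_one hψ hcop hg

theorem injective_piZMod_iff {n : ι → ℕ} [∀ i, NeZero (n i)] {ζ : ι → F}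
    (hζ : ∀ i, ζ i ^ n i = 1) :
    Injective (piZMod hζ) ↔
      (∀ i, IsPrimitiveRoot (ζ i) (n i)) ∧ Pairwise fun i j => (n i).Coprime (n j) := by
  simp only [piZMod, injective_pi_iff, zmodChar_injective_iff, Nat.card_zmod]

end Injective

end AddChar

open AddMonoidAlgebra

def RingEquiv.IsConstantStable {R : Type*} [Semiring R] (σ : R ≃+* R) : Prop :=
  ∀ k : ℕ, 1 ≤ k → ∀ c : R, (⇑σ)^[k] c = c → σ c = c

namespace RingEquiv.IsConstantStable

variable {F : Type*} [Field F] {σ : F ≃+* F}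

lemma eq_zero_of_apply_mul_eq (hσ : σ.IsConstantStable) {β x : F} {k : ℕ} (hk : 1 ≤ k)
    (hβk : β ^ k = 1) (hβσ : σ β = β) (hβ : β ≠ 1) (hx : σ x * β = x) : x = 0 := by
  have hiter : ∀ m, (⇑σ)^[m] x * β ^ m = x := by
    intro m
    induction m with
    | zero => simp
    | succ m ih =>
      rw [iterate_succ_apply', pow_succ, ← mul_assoc, ← hβσ, ← map_pow, hβσ, ← map_mul, ih,
        hx]
  have hfix : σ x = x := hσ k hk x (by simpa [hβk] using hiter k)
  rw [hfix] at hx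
  have : x * (β - 1) = 0 := by rw [mul_sub, hx, mul_one, sub_self]
  exact (mul_eq_zero.mp this).resolve_right (sub_ne_zero.mpr hβ)

variable {G : Type*} [AddCommGroup G] [Finite G]

theorem forall_fixed_eq_single_zero_iff (hσ : σ.IsConstantStable) (χ : AddChar G F)
    (hχ : ∀ g, σ (χ g) = χ g) (τ : F[G] → F[G])
    (hτ : ∀ x g, (τ x).coeff g = σ (x.coeff g) * χ g) :
    (∀ x, τ x = x → ∃ c, σ c = c ∧ x = single 0 c) ↔ Injective χ := by
  rw [AddChar.injective_iff]
  constructor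
  · intro hconst g hg
    obtain ⟨c, -, hc⟩ := hconst (single g 1) <| by
      ext g'
      rw [hτ]
      rcases eq_or_ne g g' with rfl | hgg'
      · simp [hg]
      · simp [Finsupp.single_eq_of_ne' hgg']
    rcases single_inj.mp hc with ⟨hg0, -⟩ | ⟨h10, -⟩
    · exact hg0
    · exact absurd h10 one_ne_zero
  · intro hχ₁ x hx
    have hcoeff : ∀ g, σ (x.coeff g) * χ g = x.coeff g := fun g => by rw [← hτ, hx]
    refine ⟨x.coeff 0, by simpa using hcoeff 0, ?_⟩
    ext g
    rcases eq_or_ne g 0 with rfl | hg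
    · simp
    · rw [coeff_single, Finsupp.single_eq_of_ne hg]
      exact hσ.eq_zero_of_apply_mul_eq Nat.card_pos
        (by rw [← AddChar.map_nsmul_eq_pow, card_nsmul_eq_zero', AddChar.map_zero_eq_one])
        (hχ g) (fun h1 => hg (hχ₁ h1)) (hcoeff g)

end RingEquiv.IsConstantStable

lemma AddMonoidAlgebra.single_pi_single_one_pow {ι R : Type*} [CommSemiring R] [DecidableEq ι]
    (n : ι → ℕ) (i : ι) : (single (Pi.single i 1) 1 : R[∀ i, ZMod (n i)]) ^ n i = 1 := by
  rw [single_pow, one_pow, ← Pi.single_smul, nsmul_eq_mul, mul_one, ZMod.natCast_self,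
    Pi.single_zero, one_def]

namespace MvPolynomial

section GroupAlgebra

variable {ι : Type*} (R : Type*) [CommRing R] (n : ι → ℕ)

noncomputable def cyclicIdeal : Ideal (MvPolynomial ι R) :=
  Ideal.span (Set.range fun i => X i ^ n i - 1)

lemma mk_X_pow_eq_one (i : ι) : Ideal.Quotient.mk (cyclicIdeal R n) (X i) ^ n i = 1 := by
  rw [← map_pow, ← sub_eq_zero, ← map_one (Ideal.Quotient.mk _), ← map_sub,
    Ideal.Quotient.eq_zero_iff_mem]
  exact Ideal.subset_span ⟨i, rfl⟩

variable [DecidableEq ι]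

noncomputable def toGroupAlgebra :
    (MvPolynomial ι R ⧸ cyclicIdeal R n) →ₐ[R] R[∀ i, ZMod (n i)] :=
  Ideal.Quotient.liftₐ _ (aeval fun i => single (Pi.single i 1) 1) fun _ ha =>
    RingHom.mem_ker.mp <| Ideal.span_le.mpr (by
      rintro _ ⟨i, rfl⟩
      rw [SetLike.mem_coe, RingHom.mem_ker, map_sub, map_pow, aeval_X,
        single_pi_single_one_pow, map_one, sub_self]) ha

lemma toGroupAlgebra_mk_X (i : ι) :
    toGroupAlgebra R n (Ideal.Quotient.mk _ (X i)) = single (Pi.single i 1) 1 := by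
  rw [← Ideal.Quotient.mkₐ_eq_mk R, ← AlgHom.comp_apply, toGroupAlgebra,
    Ideal.Quotient.liftₐ_comp, aeval_X]

variable [Fintype ι] [∀ i, NeZero (n i)]

noncomputable def cyclicMonomial :
    AddChar (∀ i, ZMod (n i)) (MvPolynomial ι R ⧸ cyclicIdeal R n) :=
  AddChar.piZMod (mk_X_pow_eq_one R n)

lemma cyclicMonomial_single_one (i : ι) :
    cyclicMonomial R n (Pi.single i 1) = Ideal.Quotient.mk (cyclicIdeal R n) (X i) :=
  AddChar.piZMod_single_one _ i

noncomputable def ofGroupAlgebra :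
    R[∀ i, ZMod (n i)] →ₐ[R] (MvPolynomial ι R ⧸ cyclicIdeal R n) :=
  lift R _ _ (cyclicMonomial R n).toMonoidHom

lemma toGroupAlgebra_cyclicMonomial (g : ∀ i, ZMod (n i)) :
    toGroupAlgebra R n (cyclicMonomial R n g) = single g 1 := by
  have := AddChar.ext_pi_zmod
    (ψ := (toGroupAlgebra R n : _ →* R[∀ i, ZMod (n i)]).compAddChar (cyclicMonomial R n))
    (φ := AddChar.toMonoidHomEquiv.symm (of R _)) fun i => by
      simp [cyclicMonomial_single_one, toGroupAlgebra_mk_X]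
  exact DFunLike.congr_fun this g

noncomputable def cyclicQuotientEquiv :
    (MvPolynomial ι R ⧸ cyclicIdeal R n) ≃ₐ[R] R[∀ i, ZMod (n i)] :=
  AlgEquiv.ofAlgHom (toGroupAlgebra R n) (ofGroupAlgebra R n)
    (AddMonoidAlgebra.algHom_ext (fun g => by simp [ofGroupAlgebra, toGroupAlgebra_cyclicMonomial])
      (Subsingleton.elim _ _))
    (Ideal.Quotient.algHom_ext _ <| MvPolynomial.algHom_ext fun i => by
      simp [toGroupAlgebra_mk_X, ofGroupAlgebra, cyclicMonomial_single_one])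

lemma cyclicQuotientEquiv_mk_C (c : R) :
    cyclicQuotientEquiv R n (Ideal.Quotient.mk _ (C c)) = single 0 c := by
  rw [← Ideal.Quotient.mkₐ_eq_mk R, ← MvPolynomial.algebraMap_eq, AlgHom.commutes,
    AlgEquiv.commutes]
  rfl

lemma cyclicQuotientEquiv_symm_single (g : ∀ i, ZMod (n i)) (c : R) :
    (cyclicQuotientEquiv R n).symm (single g c) =
      Ideal.Quotient.mk _ (C c) * cyclicMonomial R n g := by
  change ofGroupAlgebra R n (single g c) = _
  rw [ofGroupAlgebra, lift_single, Algebra.smul_def]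
  rfl

end GroupAlgebra

section Twist

variable {ι R : Type*} [Fintype ι] [DecidableEq ι] [CommRing R] {n : ι → ℕ}
  [∀ i, NeZero (n i)]
  {α : ι → R} (hα : ∀ i, α i ^ n i = 1)
  (σE : (MvPolynomial ι R ⧸ cyclicIdeal R n) ≃+* (MvPolynomial ι R ⧸ cyclicIdeal R n))

lemma apply_cyclicMonomial
    (hEX : ∀ i, σE (Ideal.Quotient.mk _ (X i)) = Ideal.Quotient.mk _ (C (α i) * X i))
    (g : ∀ i, ZMod (n i)) :
    σE (cyclicMonomial R n g) =
      Ideal.Quotient.mk _ (C (AddChar.piZMod hα g)) * cyclicMonomial R n g := by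
  have := AddChar.ext_pi_zmod
    (ψ := (σE : _ →* _).compAddChar (cyclicMonomial R n))
    (φ := ((Ideal.Quotient.mk _).comp C).toMonoidHom.compAddChar (AddChar.piZMod hα) *
      cyclicMonomial R n) fun i => by
      simp [cyclicMonomial_single_one, AddChar.piZMod_single_one, hEX]
  exact DFunLike.congr_fun this g

lemma coeff_cyclicQuotientEquiv_conj {σ : R ≃+* R}
    (hEC : ∀ a, σE (Ideal.Quotient.mk _ (C a)) = Ideal.Quotient.mk _ (C (σ a)))
    (hEX : ∀ i, σE (Ideal.Quotient.mk _ (X i)) = Ideal.Quotient.mk _ (C (α i) * X i))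
    (x : R[∀ i, ZMod (n i)]) (g : ∀ i, ZMod (n i)) :
    (cyclicQuotientEquiv R n (σE ((cyclicQuotientEquiv R n).symm x))).coeff g =
      σ (x.coeff g) * AddChar.piZMod hα g := by
  induction x using AddMonoidAlgebra.induction_linear with
  | zero => simp
  | add x y hx hy => simp [hx, hy, add_mul]
  | single h c =>
    rw [cyclicQuotientEquiv_symm_single, map_mul, hEC, apply_cyclicMonomial hα σE hEX,
      ← mul_assoc, ← map_mul, ← map_mul, ← cyclicQuotientEquiv_symm_single,
      AlgEquiv.apply_symm_apply]
    rcases eq_or_ne h g with rfl | hhg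
    · simp
    · simp only [coeff_single, Finsupp.single_eq_of_ne' hhg, map_zero, zero_mul]

end Twist

theorem forall_fixed_eq_mk_C_iff_injective {ι F : Type*} [Fintype ι] [DecidableEq ι] [Field F]
    {n : ι → ℕ} [∀ i, NeZero (n i)] {σ : F ≃+* F} (hσ : σ.IsConstantStable)
    {α : ι → F}
    (hα : ∀ i, α i ^ n i = 1) (hασ : ∀ i, σ (α i) = α i)
    (σE : (MvPolynomial ι F ⧸ cyclicIdeal F n) ≃+* (MvPolynomial ι F ⧸ cyclicIdeal F n))
    (hEC : ∀ a, σE (Ideal.Quotient.mk _ (C a)) = Ideal.Quotient.mk _ (C (σ a)))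
    (hEX : ∀ i, σE (Ideal.Quotient.mk _ (X i)) = Ideal.Quotient.mk _ (C (α i) * X i)) :
    (∀ f, σE f = f → ∃ c, σ c = c ∧ f = Ideal.Quotient.mk _ (C c)) ↔
      Injective (AddChar.piZMod hα) := by
  have hχσ (g : ∀ i, ZMod (n i)) : σ (AddChar.piZMod hα g) = AddChar.piZMod hα g := by
    simp [AddChar.piZMod_apply, hασ]
  rw [← hσ.forall_fixed_eq_single_zero_iff _ hχσ _
      (coeff_cyclicQuotientEquiv_conj hα σE hEC hEX),
    (cyclicQuotientEquiv F n).symm.surjective.forall]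
  refine forall_congr' fun x => ?_
  rw [← (cyclicQuotientEquiv F n).injective.eq_iff, AlgEquiv.apply_symm_apply]
  simp only [AlgEquiv.symm_apply_eq, cyclicQuotientEquiv_mk_C]

end MvPolynomial

theorem stmt7_general {F : Type*} [Field F]
    (σ : F ≃+* F)
    (hCS : ∀ k : ℕ, 1 ≤ k → ∀ c : F, (⇑σ)^[k] c = c → σ c = c)
    (e : ℕ)
    (lam : Fin e → ℕ) (hlam : ∀ i, 1 < lam i)
    (α : Fin e → F) (hαconst : ∀ i, σ (α i) = α i)
    (hαpow : ∀ i, α i ^ lam i = 1)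
    (I : Ideal (MvPolynomial (Fin e) F))
    (hI : I = Ideal.span (Set.range fun i =>
        MvPolynomial.X i ^ lam i - (1 : MvPolynomial (Fin e) F)))
    (σE : (MvPolynomial (Fin e) F ⧸ I) ≃+* (MvPolynomial (Fin e) F ⧸ I))
    (hEC : ∀ a : F, σE (Ideal.Quotient.mk I (MvPolynomial.C a)) =
        Ideal.Quotient.mk I (MvPolynomial.C (σ a)))
    (hEX : ∀ i, σE (Ideal.Quotient.mk I (MvPolynomial.X i)) =
        Ideal.Quotient.mk I (MvPolynomial.C (α i) * MvPolynomial.X i)) :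
    (∀ f : MvPolynomial (Fin e) F ⧸ I, σE f = f →
        ∃ c : F, σ c = c ∧ f = Ideal.Quotient.mk I (MvPolynomial.C c)) ↔
      ((∀ i, ∀ m : ℕ, 1 ≤ m → m < lam i → α i ^ m ≠ 1) ∧
        (∀ i j, i ≠ j → Nat.Coprime (lam i) (lam j))) := by
  subst hI
  have (i : Fin e) : NeZero (lam i) := ⟨by have := hlam i; omega⟩
  refine (MvPolynomial.forall_fixed_eq_mk_C_iff_injective hCS hαpow hαconst σE hEC hEX).trans ?_
  rw [AddChar.injective_piZMod_iff]
  refine and_congr (forall_congr' fun i => ?_) ⟨fun h i j => @h i j, fun h i j => h i j⟩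
  rw [IsPrimitiveRoot.iff (NeZero.pos _), and_iff_right (hαpow i)]
  rfl

/-- Let `(F,σ)` be a constant-stable difference field of characteristic 0
and `E = F[z_1,…,z_e]/⟨z_i^{λ_i}−1⟩` the A-extension with `σ(t_i) = α_i·t_i` for
constants `α_i` with `α_i^{λ_i} = 1`. Then `const(E,σ) = const(F,σ)` iff each `α_i`
is a primitive `λ_i`-th root of unity and the `λ_i` are pairwise coprime. -/
theorem stmt7 {F : Type*} [Field F] [CharZero F]
    (σ : F ≃+* F)
    (hCS : ∀ k : ℕ, 1 ≤ k → ∀ c : F, (⇑σ)^[k] c = c → σ c = c)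
    (e : ℕ) (he : 1 ≤ e)
    (lam : Fin e → ℕ) (hlam : ∀ i, 1 < lam i)
    (α : Fin e → F) (hαconst : ∀ i, σ (α i) = α i)
    (hαpow : ∀ i, α i ^ lam i = 1)
    (I : Ideal (MvPolynomial (Fin e) F))
    (hI : I = Ideal.span (Set.range fun i =>
        MvPolynomial.X i ^ lam i - (1 : MvPolynomial (Fin e) F)))
    (σE : (MvPolynomial (Fin e) F ⧸ I) ≃+* (MvPolynomial (Fin e) F ⧸ I))
    (hEC : ∀ a : F, σE (Ideal.Quotient.mk I (MvPolynomial.C a)) =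
        Ideal.Quotient.mk I (MvPolynomial.C (σ a)))
    (hEX : ∀ i, σE (Ideal.Quotient.mk I (MvPolynomial.X i)) =
        Ideal.Quotient.mk I (MvPolynomial.C (α i) * MvPolynomial.X i)) :
    (∀ f : MvPolynomial (Fin e) F ⧸ I, σE f = f →
        ∃ c : F, σ c = c ∧ f = Ideal.Quotient.mk I (MvPolynomial.C c)) ↔
      ((∀ i, ∀ m : ℕ, 1 ≤ m → m < lam i → α i ^ m ≠ 1) ∧
        (∀ i j, i ≠ j → Nat.Coprime (lam i) (lam j))) :=
  stmt7_general σ hCS e lam hlam α hαconst hαpow I hI σE hEC hEX
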